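/- For α ∈ (0,1), θ, μ > 0, B(α) > 0, C = (1−α)μ + B(α), and N₀ ≤ θ/μ, the quantity N(t) = (θ α t^α/C) E_{α,α+1}(−(αμ t^α)/C) + [((1−α)θ + B(α)N₀)/C] E_{α,1}(−(αμ t^α)/C) satisfies N(t) ≤ θ/μ for all t ≥ 0. -/

import Mathlib

/-- The real two-parameter Mittag-Leffler function. -/
noncomputable def mittagLefflerReal (α β : ℝ) (z : ℝ) : ℝ :=
  ∑' k : ℕ, z ^ k / Real.Gamma (α * k + β)

/-- Key Gamma ratio lower bound from log-convexity (Gautschi-type):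
`x * Γ x ≤ Γ (x + α) * (x + α) ^ (1 - α)` for `0 < α < 1`, `0 < x`. -/
lemma gamma_ratio_lower (α x : ℝ) (hα : 0 < α) (hα1 : α < 1) (hx : 0 < x) :
    x * Real.Gamma x ≤ Real.Gamma (x + α) * (x + α) ^ (1 - α) := by
  have hxα : 0 < x + α := by linarith
  have key := Real.Gamma_mul_add_mul_le_rpow_Gamma_mul_rpow_Gamma
    (s := x + α) (t := x + α + 1) (a := α) (b := 1 - α)
    hxα (by linarith) hα (by linarith) (by ring)
  have harg : α * (x + α) + (1 - α) * (x + α + 1) = x + 1 := by ring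
  rw [harg, Real.Gamma_add_one hx.ne'] at key
  have h1 : Real.Gamma (x + α + 1) = (x + α) * Real.Gamma (x + α) :=
    Real.Gamma_add_one hxα.ne'
  rw [h1] at key
  have hG : 0 < Real.Gamma (x + α) := Real.Gamma_pos_of_pos hxα
  calc x * Real.Gamma x
      ≤ Real.Gamma (x + α) ^ α * ((x + α) * Real.Gamma (x + α)) ^ (1 - α) := key
    _ = Real.Gamma (x + α) * (x + α) ^ (1 - α) := by
        rw [Real.mul_rpow hxα.le hG.le, mul_comm ((x + α) ^ (1 - α)), ← mul_assoc,
          ← Real.rpow_add hG]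
        norm_num

/-- Summability of the Mittag-Leffler series. -/
lemma summable_ml (α β z : ℝ) (hα : 0 < α) (hα1 : α < 1) (hβ : 0 < β) :
    Summable (fun k : ℕ => z ^ k / Real.Gamma (α * k + β)) := by
  apply summable_of_ratio_norm_eventually_le (r := 1/2) (by norm_num)
  -- Γ(x+α)/Γ(x) ≥ x / (x+α)^(1-α) → ∞
  have htend : Filter.Tendsto (fun k : ℕ => (α * k + β) / (α * k + β + α) ^ (1 - α))
      Filter.atTop Filter.atTop := by
    have h1 : Filter.Tendsto (fun k : ℕ => α * k + β) Filter.atTop Filter.atTop := by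
      apply Filter.tendsto_atTop_add_const_right
      exact Filter.Tendsto.const_mul_atTop hα tendsto_natCast_atTop_atTop
    have h2 : Filter.Tendsto (fun x : ℝ => x / (x + α) ^ (1 - α)) Filter.atTop Filter.atTop := by
      have h3 : Filter.Tendsto (fun x : ℝ => (x / (x + α)) * (x + α) ^ α)
          Filter.atTop Filter.atTop := by
        apply Filter.Tendsto.pos_mul_atTop (C := 1) one_pos
        · have h4 : Filter.Tendsto (fun x : ℝ => 1 - α / (x + α)) Filter.atTop (nhds 1) := by
            have h5 : Filter.Tendsto (fun x : ℝ => α / (x + α)) Filter.atTop (nhds 0) := by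
              apply Filter.Tendsto.div_atTop tendsto_const_nhds
              exact Filter.tendsto_atTop_add_const_right _ α Filter.tendsto_id
            simpa using (tendsto_const_nhds (x := (1:ℝ))).sub h5
          apply h4.congr'
          filter_upwards [Filter.eventually_gt_atTop (0 : ℝ)] with x hx
          have : x + α ≠ 0 := by positivity
          field_simp
          ring
        · exact (tendsto_rpow_atTop hα).comp
            (Filter.tendsto_atTop_add_const_right _ α Filter.tendsto_id)
      apply h3.congr'
      filter_upwards [Filter.eventually_gt_atTop (0 : ℝ)] with x hx
      have hxα : (0:ℝ) < x + α := by linarith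
      rw [div_mul_eq_mul_div, div_eq_div_iff (by positivity) (by positivity)]
      rw [mul_assoc, ← Real.rpow_add hxα]
      norm_num
    exact h2.comp h1
  filter_upwards [htend.eventually_ge_atTop (2 * |z|)] with k hk
  have hXpos : (0:ℝ) < α * k + β := by positivity
  have hgr := gamma_ratio_lower α (α * k + β) hα hα1 hXpos
  have hpow : (0:ℝ) < (α * ↑k + β + α) ^ (1 - α) := by positivity
  rw [le_div_iff₀ hpow] at hk
  have hG : 0 < Real.Gamma (α * k + β) := Real.Gamma_pos_of_pos hXpos
  have hG1 : 0 < Real.Gamma (α * ↑k + β + α) := Real.Gamma_pos_of_pos (by positivity)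
  have key : |z| * Real.Gamma (α * ↑k + β) ≤ 1 / 2 * Real.Gamma (α * ↑k + β + α) := by
    nlinarith [mul_le_mul_of_nonneg_right hk hG.le, hgr, abs_nonneg z]
  have hnorm : ∀ m : ℕ, ‖z ^ m / Real.Gamma (α * m + β)‖ = |z| ^ m / Real.Gamma (α * m + β) := by
    intro m
    rw [norm_div, norm_pow, Real.norm_eq_abs, Real.norm_eq_abs,
      abs_of_pos (Real.Gamma_pos_of_pos (by positivity))]
  rw [hnorm, hnorm]
  have harg : α * ((k:ℝ) + 1) + β = α * ↑k + β + α := by ring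
  push_cast
  rw [harg, ← mul_div_assoc, div_le_div_iff₀ hG1 hG, pow_succ]
  nlinarith [mul_le_mul_of_nonneg_left key (pow_nonneg (abs_nonneg z) k)]

/-- The fundamental identity `z E_{α,α+1}(z) = E_{α,1}(z) − 1`. -/
lemma ml_identity (α z : ℝ) (hα : 0 < α) (hα1 : α < 1) :
    z * mittagLefflerReal α (α + 1) z = mittagLefflerReal α 1 z - 1 := by
  have hs1 : Summable (fun k : ℕ => z ^ k / Real.Gamma (α * k + 1)) :=
    summable_ml α 1 z hα hα1 one_pos
  unfold mittagLefflerReal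
  rw [Summable.tsum_eq_zero_add hs1]
  have h0 : z ^ (0:ℕ) / Real.Gamma (α * (0:ℕ) + 1) = 1 := by
    norm_num [Real.Gamma_one]
  rw [h0, ← tsum_mul_left]
  have : ∀ k : ℕ, z * (z ^ k / Real.Gamma (α * k + (α + 1)))
      = z ^ (k + 1) / Real.Gamma (α * (k + 1 : ℕ) + 1) := by
    intro k
    push_cast
    rw [pow_succ]
    ring_nf
  rw [tsum_congr this]
  ring

/-- For `α ∈ (0,1)`, `θ, μ > 0`, `B(α) > 0`, `C = (1−α)μ + B(α)` and `N₀ ≤ θ/μ`,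
the Mittag-Leffler expression
`N(t) = (θα t^α/C) E_{α,α+1}(−αμ t^α/C) + ((1−α)θ + B(α)N₀)/C · E_{α,1}(−αμ t^α/C)`
satisfies `N(t) ≤ θ/μ` for all `t ≥ 0`. -/
theorem mittagLeffler_population_bound
    (α θ μ Bα : ℝ) (hα : 0 < α) (hα1 : α < 1) (hθ : 0 < θ) (hμ : 0 < μ)
    (hB : 0 < Bα)
    (C : ℝ) (hC : C = (1 - α) * μ + Bα)
    (N0 : ℝ) (hN0 : N0 ≤ θ / μ)
    (hML : ∀ x : ℝ, 0 ≤ x →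
      0 ≤ mittagLefflerReal α 1 (-x) ∧ mittagLefflerReal α 1 (-x) ≤ 1)
    (N : ℝ → ℝ)
    (hN : ∀ t, N t =
      (θ * α * t ^ α / C) * mittagLefflerReal α (α + 1) (-(α * μ * t ^ α) / C) +
      ((1 - α) * θ + Bα * N0) / C * mittagLefflerReal α 1 (-(α * μ * t ^ α) / C)) :
    ∀ t ≥ 0, N t ≤ θ / μ := by
  intro t ht
  have hCpos : 0 < C := by
    rw [hC]
    have : 0 < (1 - α) * μ := mul_pos (by linarith) hμ
    linarith
  set x : ℝ := α * μ * t ^ α / C with hx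
  have hxnn : 0 ≤ x :=
    div_nonneg (mul_nonneg (by positivity) (Real.rpow_nonneg ht α)) hCpos.le
  have hid := ml_identity α (-x) hα hα1
  obtain ⟨hE0, hE1⟩ := hML x hxnn
  set E1 := mittagLefflerReal α 1 (-x) with hE1def
  set E2 := mittagLefflerReal α (α + 1) (-x) with hE2def
  have hneg : -(α * μ * t ^ α) / C = -x := by rw [hx]; ring
  rw [hN t, hneg]
  -- from hid : -x * E2 = E1 - 1, so x * E2 = 1 - E1
  have hxE2 : x * E2 = 1 - E1 := by linarith [hid]
  -- θ * α * t ^ α / C = (θ/μ) * x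
  have hcoef : θ * α * t ^ α / C = (θ / μ) * x := by
    rw [hx]
    field_simp
  rw [hcoef]
  have hD : ((1 - α) * θ + Bα * N0) / C ≤ θ / μ := by
    rw [div_le_iff₀ hCpos, hC]
    have h1 : Bα * N0 ≤ Bα * (θ / μ) := mul_le_mul_of_nonneg_left hN0 hB.le
    have h2 : (1 - α) * θ = (1 - α) * μ * (θ / μ) := by field_simp
    nlinarith
  have hθμ : 0 < θ / μ := by positivity
  calc (θ / μ) * x * E2 + ((1 - α) * θ + Bα * N0) / C * E1
      = (θ / μ) * (1 - E1) + ((1 - α) * θ + Bα * N0) / C * E1 := by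
        rw [mul_assoc, hxE2]
    _ ≤ (θ / μ) * (1 - E1) + (θ / μ) * E1 := by
        exact add_le_add_right (mul_le_mul_of_nonneg_right hD hE0) _
    _ = θ / μ := by ring
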